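/- arXiv:2406.18870 — 3 statements merged into one kernel-verified Lean document; each statement's English description precedes it below -/
import Mathlib

section
/- Let d ≥ 6, and let F ⊆ 2^{[n]} be a hereditary family with minimum degree δ(F) ≥ 2^{d−1} − d + 1. Then every vertex x with |N(x)| = d satisfies: N(x) is a pile, i.e., N(x) ⊆ N(y) for every y ∈ N(x). -/
/-!
If `z ∈ N(x)` but `z ∉ N(y)` for some `y ∈ N(x)`, then no member of `F` contains all of
`x`, `y`, `z`. Every member containing `x` lies in `N(x)`, so it belongs to the interval
`[{x}, N(x)]` of `2^{d-1}` sets but not to the subinterval `[{x, y, z}, N(x)]` of `2^{d-3}` sets.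
Hence `d(x) ≤ 2^{d-1} - 2^{d-3}`, which is below the minimum degree once `d ≥ 6`.
-/

open Finset

/-- The degree of `x` in `F`. -/
def deg (F : Finset (Finset ℕ)) (x : ℕ) : ℕ :=
  (F.filter (fun A => x ∈ A)).card

/-- The neighborhood `N(x) = ⋃_{x ∈ A ∈ F} A`. -/
def nbhd (F : Finset (Finset ℕ)) (x : ℕ) : Finset ℕ :=
  (F.filter (fun A => x ∈ A)).biUnion id

lemma mem_nbhd {F : Finset (Finset ℕ)} {x z : ℕ} :
    z ∈ nbhd F x ↔ ∃ A ∈ F, x ∈ A ∧ z ∈ A := by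
  simp only [nbhd, mem_biUnion, mem_filter, id]
  tauto

lemma mem_nbhd_comm {F : Finset (Finset ℕ)} {x z : ℕ} : z ∈ nbhd F x ↔ x ∈ nbhd F z := by
  simp only [mem_nbhd]
  exact exists_congr fun _ => and_congr_right fun _ => and_comm

lemma mem_nbhd_self_of_mem_nbhd {F : Finset (Finset ℕ)} {x y : ℕ} (hy : y ∈ nbhd F x) :
    y ∈ nbhd F y := by
  obtain ⟨A, hA, -, hyA⟩ := mem_nbhd.mp hy
  exact mem_nbhd.mpr ⟨A, hA, hyA, hyA⟩

lemma subset_nbhd {F : Finset (Finset ℕ)} {A : Finset ℕ} {x : ℕ} (hA : A ∈ F) (hxA : x ∈ A) :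
    A ⊆ nbhd F x :=
  fun _ ha => mem_nbhd.mpr ⟨A, hA, hxA, ha⟩

lemma deg_le_of_notMem_nbhd {F : Finset (Finset ℕ)} {x y z : ℕ} (hxy : x ≠ y) (hxz : x ≠ z)
    (hyz : y ≠ z) (hy : y ∈ nbhd F x) (hz : z ∈ nbhd F x) (hzy : z ∉ nbhd F y) :
    deg F x ≤ 2 ^ ((nbhd F x).card - 1) - 2 ^ ((nbhd F x).card - 3) := by
  have hx : x ∈ nbhd F x := mem_nbhd_self_of_mem_nbhd (mem_nbhd_comm.mp hy)
  have hxyz : ({x, y, z} : Finset ℕ) ⊆ nbhd F x := by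
    simp only [insert_subset_iff, singleton_subset_iff]
    exact ⟨hx, hy, hz⟩
  have hsub : F.filter (x ∈ ·) ⊆ Icc {x} (nbhd F x) \ Icc {x, y, z} (nbhd F x) := by
    intro A hA
    obtain ⟨hAF, hxA⟩ := mem_filter.mp hA
    simp only [mem_sdiff, mem_Icc, singleton_subset_iff, insert_subset_iff]
    exact ⟨⟨hxA, subset_nbhd hAF hxA⟩,
      fun ⟨⟨_, hyA, hzA⟩, _⟩ => hzy (mem_nbhd.mpr ⟨A, hAF, hyA, hzA⟩)⟩
  have hcard : ({x, y, z} : Finset ℕ).card = 3 := card_eq_three.mpr ⟨x, y, z, hxy, hxz, hyz, rfl⟩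
  calc deg F x ≤ _ := card_le_card hsub
    _ = 2 ^ ((nbhd F x).card - 1) - 2 ^ ((nbhd F x).card - 3) := by
      rw [card_sdiff_of_subset (Icc_subset_Icc_left (by simp)),
        card_Icc_finset (singleton_subset_iff.mpr hx), card_Icc_finset hxyz, card_singleton, hcard]

lemma two_pow_sub_lt_of_six_le {d : ℕ} (hd : 6 ≤ d) :
    2 ^ (d - 1) - 2 ^ (d - 3) < 2 ^ (d - 1) - d + 1 := by
  obtain ⟨m, rfl⟩ : ∃ m, d = m + 6 := ⟨d - 6, by omega⟩
  have hm : m < 2 ^ m := Nat.lt_two_pow_self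
  have h5 : 2 ^ (m + 6 - 1) = 32 * 2 ^ m := by rw [show m + 6 - 1 = m + 5 by omega]; ring
  have h3 : 2 ^ (m + 6 - 3) = 8 * 2 ^ m := by rw [show m + 6 - 3 = m + 3 by omega]; ring
  omega

theorem stmt_15_general (n d : ℕ) (hd : 6 ≤ d)
    (F : Finset (Finset ℕ))
    (hdelta : ∀ x ∈ Finset.Icc 1 n, 2 ^ (d - 1) - d + 1 ≤ deg F x)
    (x : ℕ) (hx : x ∈ Finset.Icc 1 n) (hNx : (nbhd F x).card = d) :
    ∀ y ∈ nbhd F x, nbhd F x ⊆ nbhd F y := by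
  intro y hy z hz
  by_contra hzy
  have hyz : y ≠ z := fun h => hzy (h ▸ mem_nbhd_self_of_mem_nbhd hy)
  have hxz : x ≠ z := fun h => hzy (h ▸ mem_nbhd_comm.mp hy)
  have hxy : x ≠ y := fun h => hzy (h ▸ hz)
  have hdeg := deg_le_of_notMem_nbhd hxy hxz hyz hy hz hzy
  rw [hNx] at hdeg
  have := two_pow_sub_lt_of_six_le hd
  have := hdelta x hx
  omega

/-- for `d ≥ 6` and a hereditary family `F ⊆ 2^{[n]}` with minimum degree
at least `2^{d-1} - d + 1`, every vertex `x` with `|N(x)| = d` satisfies `N(x) ⊆ N(y)`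
for every `y ∈ N(x)` (so `N(x)` is a pile). -/
theorem stmt_15 (n d : ℕ) (hd : 6 ≤ d)
    (F : Finset (Finset ℕ)) (hF : F ⊆ (Finset.Icc 1 n).powerset)
    (hered : ∀ A ∈ F, ∀ B ⊆ A, B ∈ F)
    (hdelta : ∀ x ∈ Finset.Icc 1 n, 2 ^ (d - 1) - d + 1 ≤ deg F x)
    (x : ℕ) (hx : x ∈ Finset.Icc 1 n) (hNx : (nbhd F x).card = d) :
    ∀ y ∈ nbhd F x, nbhd F x ⊆ nbhd F y :=
  stmt_15_general n d hd F hdelta x hx hNx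
end

section
/- Let F ⊆ 2^{[n]} be a hereditary family with δ(F) ≥ 2^{d−1} − c + 1 where 1 ≤ c ≤ d, let P = [d] be an isolated pile, G = F|_{[d]}, and suppose |G| = 2^d − t. If [d] contains at least one bad vertex (which it does since P is a pile), then t ≤ 2c − 2; consequently every x ∈ [d] satisfies d_G(x) ≥ 2^{d−1} − 2c + 2. -/
open Finset

/-- `P` is a pile of `F` (of size `d`). -/
def IsPile (F : Finset (Finset ℕ)) (d : ℕ) (P : Finset ℕ) : Prop :=
  P.card = d ∧ (∀ y ∈ P, P ⊆ nbhd F y) ∧ ∃ z ∈ P, nbhd F z = P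

/-!
The centre `z` of the pile satisfies `N(z) = [d]`, so every member of `F` through `z` lies in
`G = F|_{[d]}` and `d_G(z) = d_F(z) ≥ 2^{d-1} - c + 1`. In a hereditary family, deleting `x`
injects the members through `x` into those avoiding it, so `2 d_G(z) ≤ |G| = 2^d - t`, which is
`t ≤ 2c - 2`. Finally at most `2^{d-1}` members of `G` avoid a given `x ∈ [d]`, so
`d_G(x) ≥ 2^d - t - 2^{d-1}`.
-/

section

variable {α : Type*} [DecidableEq α] {𝒜 : Finset (Finset α)}

theorem IsLowerSet.two_mul_card_filter_mem_le (h : IsLowerSet (𝒜 : Set (Finset α))) (a : α) :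
    2 * #{s ∈ 𝒜 | a ∈ s} ≤ #𝒜 := by
  have hle := card_le_card (h.memberSubfamily_subset_nonMemberSubfamily (a := a))
  have hsplit := card_memberSubfamily_add_card_nonMemberSubfamily a 𝒜
  have hfilter := card_filter_add_card_filter_not (s := 𝒜) (a ∈ ·)
  rw [Finset.nonMemberSubfamily] at hle hsplit
  omega

theorem IsLowerSet.filter_subset (h : IsLowerSet (𝒜 : Set (Finset α))) (P : Finset α) :
    IsLowerSet (({s ∈ 𝒜 | s ⊆ P} : Finset (Finset α)) : Set (Finset α)) := by
  intro s t hts hs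
  simp only [coe_filter, Set.mem_ofPred_eq] at hs ⊢
  exact ⟨h hts hs.1, hts.trans hs.2⟩

theorem Finset.card_le_card_filter_mem_add_two_pow {P : Finset α} (h𝒜 : ∀ s ∈ 𝒜, s ⊆ P) {a : α}
    (ha : a ∈ P) : #𝒜 ≤ #{s ∈ 𝒜 | a ∈ s} + 2 ^ (#P - 1) := by
  have havoid : {s ∈ 𝒜 | a ∉ s} ⊆ (P.erase a).powerset := by
    intro s hs
    rw [mem_filter] at hs
    exact mem_powerset.mpr (subset_erase.mpr ⟨h𝒜 s hs.1, hs.2⟩)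
  have hle := card_le_card havoid
  rw [card_powerset, card_erase_of_mem ha] at hle
  have hsplit := card_filter_add_card_filter_not (s := 𝒜) (a ∈ ·)
  omega

end

theorem exists_mem_of_mem_nbhd {F : Finset (Finset ℕ)} {x y : ℕ} (h : x ∈ nbhd F y) :
    ∃ A ∈ F, y ∈ A ∧ x ∈ A := by
  simpa [nbhd, and_assoc] using h

theorem deg_eq_card_filter_subset_of_nbhd_eq {F : Finset (Finset ℕ)} {P : Finset ℕ} {z : ℕ}
    (hz : nbhd F z = P) : deg F z = #{S ∈ F | S ⊆ P ∧ z ∈ S} := by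
  refine congrArg card (filter_congr fun A hA => ⟨fun hzA => ⟨?_, hzA⟩, And.right⟩)
  rw [← hz]
  exact fun a ha => mem_biUnion.mpr ⟨A, mem_filter.mpr ⟨hA, hzA⟩, ha⟩

theorem stmt_16_general (n d c t : ℕ)
    (F : Finset (Finset ℕ)) (hF : F ⊆ (Finset.Icc 1 n).powerset)
    (hered : ∀ A ∈ F, ∀ B ⊆ A, B ∈ F)
    (hdelta : ∀ x ∈ Finset.Icc 1 n, (2 ^ (d - 1) - c + 1 : ℤ) ≤ (deg F x : ℤ))
    (hP : IsPile F d (Finset.Icc 1 d))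
    (hG : ((F.filter (fun S => S ⊆ Finset.Icc 1 d)).card : ℤ) = 2 ^ d - t) :
    (t : ℤ) ≤ 2 * c - 2
    ∧ ∀ x ∈ Finset.Icc 1 d,
        (2 ^ (d - 1) - 2 * c + 2 : ℤ)
          ≤ ((F.filter (fun S => S ⊆ Finset.Icc 1 d ∧ x ∈ S)).card : ℤ) := by
  obtain ⟨-, hsub, z, hzP, hz⟩ := hP
  obtain ⟨A, hA, hzA, -⟩ := exists_mem_of_mem_nbhd (hsub z hzP hzP)
  have hdz := hdelta z (mem_powerset.mp (hF hA) hzA)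
  rw [deg_eq_card_filter_subset_of_nbhd_eq hz, ← filter_filter] at hdz
  have hF_lower : IsLowerSet (F : Set (Finset ℕ)) := fun A B hBA hA => hered A hA B hBA
  have hG_lower := hF_lower.filter_subset (Icc 1 d)
  have hz_half := hG_lower.two_mul_card_filter_mem_le z
  have hpow : (2 : ℤ) ^ d = 2 * 2 ^ (d - 1) := by
    rw [← pow_succ', Nat.sub_add_cancel ((mem_Icc.mp hzP).1.trans (mem_Icc.mp hzP).2)]
  zify at hz_half
  have ht : (t : ℤ) ≤ 2 * c - 2 := by linarith
  refine ⟨ht, fun x hx => ?_⟩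
  have hx_bound := card_le_card_filter_mem_add_two_pow (𝒜 := {S ∈ F | S ⊆ Icc 1 d})
    (fun S hS => (mem_filter.mp hS).2) hx
  rw [Nat.card_Icc, add_tsub_cancel_right, filter_filter] at hx_bound
  zify at hx_bound
  linarith

/-- for an isolated pile `P = [d]` with `|G| = 2^d - t`
(where `G = F|_{[d]}`), one has `t ≤ 2c - 2` and every `x ∈ [d]` satisfies
`d_G(x) ≥ 2^{d-1} - 2c + 2`. -/
theorem stmt_16 (n d c t : ℕ) (hc1 : 1 ≤ c) (hcd : c ≤ d)
    (F : Finset (Finset ℕ)) (hF : F ⊆ (Finset.Icc 1 n).powerset)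
    (hered : ∀ A ∈ F, ∀ B ⊆ A, B ∈ F)
    (hdelta : ∀ x ∈ Finset.Icc 1 n, (2 ^ (d - 1) - c + 1 : ℤ) ≤ (deg F x : ℤ))
    (hP : IsPile F d (Finset.Icc 1 d))
    (hiso : ∀ P', IsPile F d P' → P' ≠ Finset.Icc 1 d → Disjoint P' (Finset.Icc 1 d))
    (ht : t ≤ 2 ^ d)
    (hG : ((F.filter (fun S => S ⊆ Finset.Icc 1 d)).card : ℤ) = 2 ^ d - t) :
    (t : ℤ) ≤ 2 * c - 2
    ∧ ∀ x ∈ Finset.Icc 1 d,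
        (2 ^ (d - 1) - 2 * c + 2 : ℤ)
          ≤ ((F.filter (fun S => S ⊆ Finset.Icc 1 d ∧ x ∈ S)).card : ℤ) :=
  stmt_16_general n d c t F hF hered hdelta hP hG
end

section
/- Let F ⊆ 2^{[n]} be a hereditary family, P = [d] an isolated pile, G = F|_{[d]}, M = 2^{[d]} ∖ G, and N = {[d]∖M : M ∈ M}. If x ∈ [d] is a bad vertex (i.e. d_F(x) = d_G(x)) and d_F(x) ≥ 2^{d−1} − c + 1 with c ≤ |M| = t, then {x} ∈ N; i.e., [d]∖{x} is a missing set of G. -/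
open Finset

lemma card_powerset_filter_mem_aux (P : Finset ℕ) (x : ℕ) (hx : x ∈ P) :
    (P.powerset.filter (fun S => x ∈ S)).card = 2 ^ (P.card - 1) := by
  classical
  have h1 : P.powerset.filter (fun S => ¬ x ∈ S) = (P.erase x).powerset := by
    ext S
    simp [Finset.subset_erase, and_comm]
  have h2 := Finset.card_filter_add_card_filter_not
      (p := fun S => x ∈ S) (s := P.powerset)
  rw [h1, Finset.card_powerset, Finset.card_powerset, Finset.card_erase_of_mem hx] at h2
  have hd : 1 ≤ P.card := Finset.one_le_card.mpr ⟨x, hx⟩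
  have h3 : 2 ^ P.card = 2 * 2 ^ (P.card - 1) := by
    rw [← pow_succ']
    congr 1
    omega
  omega

/-- for an isolated pile `P = [d]`, `G = F|_{[d]}`,
`M = 2^{[d]} ∖ G`, `N = { [d]∖M : M ∈ M }`, if `x ∈ [d]` is bad (`d_F(x) = d_G(x)`)
and `d_F(x) ≥ 2^{d-1} - c + 1` with `c ≤ |M|`, then `{x} ∈ N`. -/
theorem stmt_17 (n d c : ℕ)
    (F : Finset (Finset ℕ)) (hF : F ⊆ (Finset.Icc 1 n).powerset)
    (hered : ∀ A ∈ F, ∀ B ⊆ A, B ∈ F)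
    (hP : IsPile F d (Finset.Icc 1 d))
    (hiso : ∀ P', IsPile F d P' → P' ≠ Finset.Icc 1 d → Disjoint P' (Finset.Icc 1 d))
    (x : ℕ) (hx : x ∈ Finset.Icc 1 d)
    (hbad : deg F x = deg (F.filter (fun S => S ⊆ Finset.Icc 1 d)) x)
    (hdeg : (2 ^ (d - 1) - c + 1 : ℤ) ≤ (deg F x : ℤ))
    (hct : c ≤ ((Finset.Icc 1 d).powerset \ F.filter (fun S => S ⊆ Finset.Icc 1 d)).card) :
    ({x} : Finset ℕ)
      ∈ ((Finset.Icc 1 d).powerset \ F.filter (fun S => S ⊆ Finset.Icc 1 d)).image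
          (fun M => Finset.Icc 1 d \ M) := by
  classical
  set P := Finset.Icc 1 d with hPdef
  have hd : 1 ≤ d := by
    have := Finset.mem_Icc.mp hx; omega
  have hPcard : P.card = d := by simp [hPdef]
  set G := F.filter (fun S => S ⊆ P) with hGdef
  set Mm := P.powerset \ G with hMdef
  have hGsub : G ⊆ P.powerset := by
    intro S hS
    rw [Finset.mem_powerset]
    exact (Finset.mem_filter.mp hS).2
  have hMx : ∃ A ∈ Mm, x ∉ A := by
    by_contra h
    push_neg at h
    have hMfilt : Mm.filter (fun S => x ∈ S) = Mm :=
      Finset.filter_true_of_mem h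
    have hunion : P.powerset.filter (fun S => x ∈ S)
        = G.filter (fun S => x ∈ S) ∪ Mm.filter (fun S => x ∈ S) := by
      rw [← Finset.filter_union]
      congr 1
      rw [hMdef, Finset.union_sdiff_of_subset hGsub]
    have hdisj : Disjoint (G.filter (fun S => x ∈ S)) (Mm.filter (fun S => x ∈ S)) := by
      apply Finset.disjoint_filter_filter
      rw [hMdef]
      exact Finset.disjoint_sdiff
    have hcards : (P.powerset.filter (fun S => x ∈ S)).card
        = (G.filter (fun S => x ∈ S)).card + Mm.card := by
      rw [hunion, Finset.card_union_of_disjoint hdisj, hMfilt]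
    have hcount : (P.powerset.filter (fun S => x ∈ S)).card = 2 ^ (d - 1) := by
      rw [card_powerset_filter_mem_aux P x hx, hPcard]
    have hdG : deg G x = (G.filter (fun S => x ∈ S)).card := rfl
    rw [hcount, ← hdG] at hcards
    -- now combine with hbad, hdeg, hct
    rw [hbad] at hdeg
    have hct' : c ≤ Mm.card := hct
    have : (deg G x : ℤ) + Mm.card = 2 ^ (d - 1) := by exact_mod_cast hcards.symm
    omega
  obtain ⟨A, hA, hxA⟩ := hMx
  obtain ⟨hAP, hAG⟩ := Finset.mem_sdiff.mp hA
  have hAsub : A ⊆ P := Finset.mem_powerset.mp hAP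
  have hmiss : P \ {x} ∈ Mm := by
    rw [hMdef, Finset.mem_sdiff]
    constructor
    · exact Finset.mem_powerset.mpr Finset.sdiff_subset
    · intro hmem
      apply hAG
      have hPF : P \ {x} ∈ F := (Finset.mem_filter.mp hmem).1
      have hAsub' : A ⊆ P \ {x} := by
        intro a ha
        rw [Finset.mem_sdiff]
        exact ⟨hAsub ha, by simp; rintro rfl; exact hxA ha⟩
      exact Finset.mem_filter.mpr ⟨hered _ hPF _ hAsub', hAsub⟩
  refine Finset.mem_image.mpr ⟨P \ {x}, hmiss, ?_⟩
  rw [sdiff_sdiff_right_self, inf_eq_inter]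
  exact Finset.inter_eq_right.mpr (Finset.singleton_subset_iff.mpr hx)
end
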